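/- Any closed curve of length at most 1/2 + 1/50 that encloses an axis-parallel square of side length 1/8 lies entirely within distance sqrt((1/16+1/100)^2 - (1/16)^2) of the boundary of the square. -/

import Mathlib

/-!
Shoot a ray from each corner of the square outwards, continuing a side: down from the
bottom-left corner, right from the bottom-right one, up from the top-right one and left from the
top-left one. The enclosed region is bounded, so each ray leaves it, and the curve passes through
the four exit points. Suppose the curve also passes through a point `p` farther than
`r = √((1/16 + 1/100)² - (1/16)²)` from the boundary of the square. As the curve is closed, it is
at least as long as the closed polygon through these five points in the order the curve visits
them. If the exit points are visited in their cyclic order around the square, this polygon is a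
pentagon, and by the triangle inequality its perimeter exceeds `6/16` by at least the length of a
path from a corner through `p` to the exit point on the ray from the adjacent corner. That path
is longer than `2 (1/16 + 1/100)`; the critical position of `p` is next to the side joining the
two corners, where this says that the ellipse with foci at these corners and semi-major axis
`1/16 + 1/100` has semi-minor axis `r`. Otherwise the polygon, shortcut at `p`, runs through both
diagonals of the quadrilateral of exit points and is at least `2/8 + 2 √2/8` long. Either way
the curve is longer than `1/2 + 1/50`.
-/

open Set Real Bornology

local notation "ℝ²" => EuclideanSpace ℝ (Fin 2)

section Tour

variable {X : Type*} [PseudoMetricSpace X]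

def tourLength {n : ℕ} [NeZero n] (x : Fin n → X) : ℝ := ∑ i, dist (x i) (x (i + 1))

lemma tourLength_comp_add {n : ℕ} [NeZero n] (x : Fin n → X) (k : Fin n) :
    tourLength (fun i ↦ x (i + k)) = tourLength x := by
  simp only [tourLength, add_right_comm _ (1 : Fin n) k]
  exact Equiv.sum_comp (Equiv.addRight k) fun i ↦ dist (x i) (x (i + 1))

lemma tourLength_eq_sum_add_dist {n : ℕ} (x : Fin (n + 1) → X) :
    tourLength x =
      ∑ i : Fin n, dist (x i.castSucc) (x i.succ) + dist (x (Fin.last n)) (x 0) := by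
  simp [tourLength, Fin.sum_univ_castSucc, Fin.coeSucc_eq_succ]

lemma ofReal_sum_dist_le_eVariationOn {γ : ℝ → X} {n : ℕ} {w : Fin (n + 1) → ℝ}
    (hw : Monotone w) :
    ENNReal.ofReal (∑ i : Fin n, dist (γ (w i.castSucc)) (γ (w i.succ))) ≤
      eVariationOn γ (Icc (w 0) (w (Fin.last n))) := by
  set u : ℕ → ℝ := fun k ↦ w ⟨min k n, by omega⟩
  have hu : Monotone u := fun i j hij ↦ hw (Fin.mk_le_mk.2 (min_le_min_right n hij))
  have hmem : ∀ k, u k ∈ Icc (w 0) (w (Fin.last n)) := fun k ↦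
    ⟨hw (Fin.zero_le _), hw (Fin.le_last _)⟩
  convert eVariationOn.sum_le (f := γ) (n := n) hu hmem using 1
  rw [ENNReal.ofReal_sum_of_nonneg (fun _ _ ↦ dist_nonneg), Finset.sum_range]
  refine Finset.sum_congr rfl fun i _ ↦ ?_
  simp only [u, edist_dist, min_eq_left (show (i : ℕ) + 1 ≤ n from i.isLt),
    min_eq_left i.isLt.le]
  rw [dist_comm]; rfl

lemma eVariationOn_Icc_add_Icc (γ : ℝ → X) {a b c : ℝ} (hab : a ≤ b) (hbc : b ≤ c) :
    eVariationOn γ (Icc a b) + eVariationOn γ (Icc b c) = eVariationOn γ (Icc a c) := by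
  simpa using eVariationOn.Icc_add_Icc γ hab hbc (mem_univ b)

lemma ofReal_tourLength_le_eVariationOn {γ : ℝ → X} {a b : ℝ} (hγ : γ a = γ b) {n : ℕ}
    {w : Fin (n + 1) → ℝ} (hw : Monotone w) (hmem : ∀ i, w i ∈ Icc a b) :
    ENNReal.ofReal (tourLength (γ ∘ w)) ≤ eVariationOn γ (Icc a b) := by
  obtain ⟨ha, -⟩ := hmem 0
  obtain ⟨-, hb⟩ := hmem (Fin.last n)
  have hclose : edist (γ (w (Fin.last n))) (γ (w 0)) ≤
      eVariationOn γ (Icc (w (Fin.last n)) b) + eVariationOn γ (Icc a (w 0)) := by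
    refine (edist_triangle _ (γ b) _).trans (add_le_add ?_ ?_)
    · exact eVariationOn.edist_le γ (left_mem_Icc.2 hb) (right_mem_Icc.2 hb)
    · rw [← hγ]
      exact eVariationOn.edist_le γ (left_mem_Icc.2 ha) (right_mem_Icc.2 ha)
  rw [tourLength_eq_sum_add_dist, ENNReal.ofReal_add (Finset.sum_nonneg fun _ _ ↦ dist_nonneg)
    dist_nonneg, ← edist_dist, ← eVariationOn_Icc_add_Icc γ ha ((hw (Fin.zero_le _)).trans hb),
    ← eVariationOn_Icc_add_Icc γ (hw (Fin.zero_le _)) hb]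
  calc _ ≤ eVariationOn γ (Icc (w 0) (w (Fin.last n))) +
        (eVariationOn γ (Icc (w (Fin.last n)) b) + eVariationOn γ (Icc a (w 0))) :=
        add_le_add (ofReal_sum_dist_le_eVariationOn hw) hclose
    _ = _ := by ring

lemma exists_perm_ofReal_tourLength_le {γ : ℝ → X} {a b : ℝ} (hγ : γ a = γ b) {n : ℕ}
    {t : Fin (n + 1) → ℝ} (hmem : ∀ i, t i ∈ Icc a b) :
    ∃ σ : Equiv.Perm (Fin (n + 1)),
      ENNReal.ofReal (tourLength (γ ∘ t ∘ σ)) ≤ eVariationOn γ (Icc a b) :=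
  ⟨Tuple.sort t, ofReal_tourLength_le_eVariationOn hγ (Tuple.monotone_sort t) fun _ ↦ hmem _⟩

lemma tourLength_sub_right {E : Type*} [SeminormedAddCommGroup E] {n : ℕ} [NeZero n]
    (x : Fin n → E) (c : E) : tourLength (fun i ↦ x i - c) = tourLength x := by
  simp only [tourLength, dist_sub_right]

theorem lt_tourLength_of_square (x : Fin 5 → X) {L α β : ℝ} (hL : L < 2 * α + 2 * β)
    (h12 : α ≤ dist (x 1) (x 2)) (h23 : α ≤ dist (x 2) (x 3)) (h34 : α ≤ dist (x 3) (x 4))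
    (h41 : α ≤ dist (x 4) (x 1)) (h13 : β ≤ dist (x 1) (x 3)) (h24 : β ≤ dist (x 2) (x 4))
    (hp1 : L < dist (x 1) (x 0) + dist (x 0) (x 2) + dist (x 2) (x 3) + dist (x 3) (x 4) +
      dist (x 4) (x 1))
    (hp2 : L < dist (x 2) (x 0) + dist (x 0) (x 3) + dist (x 3) (x 4) + dist (x 4) (x 1) +
      dist (x 1) (x 2))
    (hp3 : L < dist (x 3) (x 0) + dist (x 0) (x 4) + dist (x 4) (x 1) + dist (x 1) (x 2) +
      dist (x 2) (x 3))
    (hp4 : L < dist (x 4) (x 0) + dist (x 0) (x 1) + dist (x 1) (x 2) + dist (x 2) (x 3) +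
      dist (x 3) (x 4))
    (σ : Equiv.Perm (Fin 5)) : L < tourLength (x ∘ σ) := by
  -- A tour of `x 1, …, x 4` either runs around the square, and inserting `x 0` gives one of the
  -- pentagons `hp1`–`hp4`, or it runs through both diagonals.
  have key : ∀ a b c e : Fin 5, [0, a, b, c, e].Nodup →
      L < dist (x 0) (x a) + dist (x a) (x b) + dist (x b) (x c) + dist (x c) (x e) +
        dist (x e) (x 0) := by
    have cases5 : ∀ i : Fin 5, i = 0 ∨ i = 1 ∨ i = 2 ∨ i = 3 ∨ i = 4 := by decide
    have tri := fun i j ↦ dist_triangle (x i) (x 0) (x j)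
    have comm := fun i j ↦ dist_comm (x i) (x j)
    intro a b c e h
    simp only [List.nodup_cons, List.mem_cons, List.not_mem_nil, List.nodup_nil, not_or,
      or_false, and_true] at h
    obtain ⟨⟨h0a, h0b, h0c, h0e⟩, ⟨hab, hac, hae⟩, ⟨hbc, hbe⟩, hce, -⟩ := h
    rcases cases5 a with rfl | rfl | rfl | rfl | rfl <;> try contradiction
    all_goals rcases cases5 b with rfl | rfl | rfl | rfl | rfl <;> try contradiction
    all_goals rcases cases5 c with rfl | rfl | rfl | rfl | rfl <;> try contradiction
    all_goals rcases cases5 e with rfl | rfl | rfl | rfl | rfl <;> try contradiction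
    all_goals
      linarith [tri 1 3, tri 2 4, tri 1 2, tri 2 3, tri 3 4, tri 4 1, comm 0 1, comm 0 2,
        comm 0 3, comm 0 4, comm 2 1, comm 3 2, comm 4 3, comm 1 4, comm 3 1, comm 4 2]
  set k := σ.symm 0
  have hk : σ k = 0 := σ.apply_symm_apply 0
  have hnd : [σ k, σ (1 + k), σ (2 + k), σ (3 + k), σ (4 + k)].Nodup := by simp
  rw [← tourLength_comp_add _ k]
  simp only [tourLength, Function.comp_apply, Fin.sum_univ_five, Fin.reduceAdd, zero_add, hk]
  rw [hk] at hnd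
  exact key _ _ _ _ hnd

end Tour

lemma exists_nonneg_add_smul_mem_frontier {E : Type*} [NormedAddCommGroup E] [NormedSpace ℝ E]
    {U : Set E} (hU : IsBounded U) {q : E} (hq : q ∈ U) {v : E} (hv : v ≠ 0) :
    ∃ T : ℝ, 0 ≤ T ∧ q + T • v ∈ frontier U := by
  let f : NNReal → E := fun T ↦ q + (T : ℝ) • v
  have hf : Continuous f := by fun_prop
  have hne : (f ⁻¹' U).Nonempty := ⟨0, by simpa [f] using hq⟩
  have hnu : f ⁻¹' U ≠ univ := by
    obtain ⟨R, hR⟩ := hU.subset_closedBall q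
    have hv' : 0 < ‖v‖ := norm_pos_iff.2 hv
    set T := ((|R| + 1) / ‖v‖).toNNReal
    have hT : dist (f T) q = |R| + 1 := by
      rw [dist_eq_norm, add_sub_cancel_left, norm_smul, Real.coe_toNNReal _ (by positivity),
        Real.norm_of_nonneg (by positivity), div_mul_cancel₀ _ hv'.ne']
    intro h
    have := hR (show T ∈ f ⁻¹' U from h ▸ mem_univ T)
    rw [Metric.mem_closedBall, hT] at this
    linarith [le_abs_self R]
  obtain ⟨T, hT⟩ := nonempty_frontier_iff.2 ⟨hne, hnu⟩
  exact ⟨T, T.2, hf.frontier_preimage_subset U hT⟩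

lemma interior_setOf_apply_mem (s t : Set ℝ) :
    interior {p : ℝ² | p 0 ∈ s ∧ p 1 ∈ t} = {p | p 0 ∈ interior s ∧ p 1 ∈ interior t} := by
  have key : ∀ (i : Fin 2) (u : Set ℝ),
      interior ((fun p : ℝ² ↦ p i) ⁻¹' u) = (fun p : ℝ² ↦ p i) ⁻¹' interior u := fun i u ↦
    (((EuclideanSpace.proj i : ℝ² →L[ℝ] ℝ).isOpenMap fun x ↦
      ⟨EuclideanSpace.single i x, by simp⟩).preimage_interior_eq_interior_preimage
      (EuclideanSpace.proj i).continuous u).symm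
  calc interior {p : ℝ² | p 0 ∈ s ∧ p 1 ∈ t}
      = interior ((fun p : ℝ² ↦ p 0) ⁻¹' s ∩ (fun p : ℝ² ↦ p 1) ⁻¹' t) := rfl
    _ = _ := by rw [interior_inter, key, key]; rfl

section Plane

lemma dist_eq_sqrt (P Q : ℝ²) : dist P Q = √((P 0 - Q 0) ^ 2 + (P 1 - Q 1) ^ 2) := by
  simp [EuclideanSpace.dist_eq, Fin.sum_univ_two, Real.dist_eq, sq_abs]

lemma abs_sub_apply_le_dist (P Q : ℝ²) (i : Fin 2) : |P i - Q i| ≤ dist P Q :=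
  PiLp.dist_apply_le P Q i

def squareBoundary (h : ℝ) : Set ℝ² := {q | max |q 0| |q 1| = h}

lemma two_mul_sqrt_le_dist_add_dist (h : ℝ) (p : ℝ²) :
    2 * √(h ^ 2 + (p 1 + h) ^ 2) ≤ dist !₂[-h, -h] p + dist p !₂[h, -h] := by
  -- reflect `(h, -h)` in the horizontal line through `p`
  have key := dist_triangle !₂[-h, -h] p !₂[h, 2 * p 1 + h]
  simp only [dist_eq_sqrt, Matrix.cons_val_zero, Matrix.cons_val_one] at key ⊢
  rwa [show (-h - h) ^ 2 + (-h - (2 * p 1 + h)) ^ 2 = 2 ^ 2 * (h ^ 2 + (p 1 + h) ^ 2) by ring,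
    show (p 1 - (2 * p 1 + h)) ^ 2 = (p 1 - -h) ^ 2 by ring, sqrt_mul' _ (by positivity),
    sqrt_sq zero_le_two] at key

lemma dist_eq_abs_of_apply_one_eq {P Q : ℝ²} (hPQ : P 1 = Q 1) : dist P Q = |P 0 - Q 0| := by
  rw [dist_eq_sqrt, hPQ, sub_self, zero_pow two_ne_zero, add_zero, sqrt_sq_eq_abs]

lemma dist_eq_abs_of_apply_zero_eq {P Q : ℝ²} (hPQ : P 0 = Q 0) : dist P Q = |P 1 - Q 1| := by
  rw [dist_eq_sqrt, hPQ, sub_self, zero_pow two_ne_zero, zero_add, sqrt_sq_eq_abs]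

lemma dist_le_abs_add_abs (P Q : ℝ²) : dist P Q ≤ |P 0 - Q 0| + |P 1 - Q 1| := by
  rw [dist_eq_sqrt, sqrt_le_left (by positivity)]
  nlinarith [abs_nonneg (P 0 - Q 0), abs_nonneg (P 1 - Q 1), sq_abs (P 0 - Q 0),
    sq_abs (P 1 - Q 1)]

variable {h ε : ℝ}

lemma two_mul_add_lt_dist_add_dist (hε : 0 ≤ ε) (hεh : 3 * ε ≤ 2 * h) {p m : ℝ²}
    (hp : ∀ q ∈ squareBoundary h, (h + ε) ^ 2 - h ^ 2 < dist p q ^ 2)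
    (hm₀ : h ≤ m 0) (hm₁ : m 1 = -h) :
    2 * h + 2 * ε < dist !₂[-h, -h] p + dist p m := by
  have hh : 0 ≤ h := by linarith
  have hfar : ∀ q ∈ squareBoundary h, 2 * ε < dist p q := fun q hq ↦ by
    nlinarith [hp q hq, dist_nonneg (x := p) (y := q)]
  have hO₁ : ∀ i, |(!₂[-h, -h] : ℝ²) i - p i| ≤ dist !₂[-h, -h] p := abs_sub_apply_le_dist _ _
  have hm : ∀ i, |p i - m i| ≤ dist p m := abs_sub_apply_le_dist _ _
  simp only [Fin.forall_fin_two, Matrix.cons_val_zero, Matrix.cons_val_one, hm₁] at hO₁ hm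
  rcases lt_or_ge h (p 1) with hv | hv
  · linarith [neg_abs_le (-h - p 1), le_abs_self (p 1 - -h)]
  rcases le_or_gt |p 0| h with hu | hu
  · -- the case that forces the constant `(h + ε) ^ 2 - h ^ 2`
    have hq := hp !₂[p 0, -h] (by simp [squareBoundary, abs_of_nonneg hh, hu])
    rw [dist_eq_abs_of_apply_zero_eq (by simp), sq_abs] at hq
    have hsqrt : h + ε < √(h ^ 2 + (p 1 + h) ^ 2) := by
      rw [lt_sqrt (by linarith)]
      simp only [Matrix.cons_val_one, Matrix.cons_val_zero, sub_neg_eq_add] at hq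
      linarith
    have hO₂ : dist p !₂[h, -h] ≤ dist p m := by
      rw [dist_eq_sqrt, dist_eq_sqrt]
      simp only [Matrix.cons_val_zero, Matrix.cons_val_one, hm₁]
      gcongr √(?_ + _)
      nlinarith [abs_le.1 hu]
    linarith [two_mul_sqrt_le_dist_add_dist h p]
  rcases lt_abs.1 hu with hu | hu
  · rcases le_or_gt (-h) (p 1) with hv' | hv'
    · have := hfar !₂[h, p 1] (by simp [squareBoundary, abs_of_nonneg hh, abs_le.2 ⟨hv', hv⟩])
      rw [dist_eq_abs_of_apply_one_eq (by simp)] at this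
      simp only [Matrix.cons_val_zero] at this
      rw [abs_of_pos (by linarith)] at this
      linarith [neg_abs_le (-h - p 0), dist_nonneg (x := p) (y := m)]
    · have := hfar !₂[h, -h] (by simp [squareBoundary, abs_of_nonneg hh])
      have := dist_le_abs_add_abs p !₂[h, -h]
      simp only [Matrix.cons_val_zero, Matrix.cons_val_one] at this
      rw [abs_of_pos (by linarith), abs_of_neg (by linarith)] at this
      linarith [neg_abs_le (-h - p 0), le_abs_self (-(p 1 - -h)), abs_neg (p 1 - -h)]
  · have hm' := neg_abs_le (p 0 - m 0)
    rcases le_or_gt (-h) (p 1) with hv' | hv'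
    · have := hfar !₂[-h, p 1] (by simp [squareBoundary, abs_of_nonneg hh, abs_le.2 ⟨hv', hv⟩])
      rw [dist_eq_abs_of_apply_one_eq (by simp)] at this
      simp only [Matrix.cons_val_zero] at this
      rw [abs_of_neg (by linarith)] at this
      linarith [dist_nonneg (x := (!₂[-h, -h] : ℝ²)) (y := p)]
    · have := hfar !₂[-h, -h] (by simp [squareBoundary, abs_of_nonneg hh])
      rw [dist_comm] at this
      linarith

def quarterTurn (p : ℝ²) : ℝ² := !₂[-p 1, p 0]

@[simp] lemma quarterTurn_apply_zero (p : ℝ²) : quarterTurn p 0 = -p 1 := rfl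
@[simp] lemma quarterTurn_apply_one (p : ℝ²) : quarterTurn p 1 = p 0 := rfl

@[simp] lemma dist_quarterTurn (p q : ℝ²) : dist (quarterTurn p) (quarterTurn q) = dist p q := by
  rw [dist_eq_sqrt, dist_eq_sqrt]
  simp only [quarterTurn_apply_zero, quarterTurn_apply_one]
  ring_nf

lemma lt_dist_quarterTurn_sq {p : ℝ²} {d : ℝ}
    (hp : ∀ q ∈ squareBoundary h, d < dist p q ^ 2) :
    ∀ q ∈ squareBoundary h, d < dist (quarterTurn p) q ^ 2 := by
  intro q hq
  convert hp !₂[q 1, -q 0] (by simpa [squareBoundary, max_comm] using hq) using 2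
  rw [← dist_quarterTurn p]
  congr 1
  ext i
  fin_cases i <;> simp [quarterTurn]

/-- `m₁, m₂, m₃, m₄` lie on the rays leaving the corners `(-h, -h)`, `(h, -h)`, `(h, h)`,
`(-h, h)` of `[-h, h]²` downwards, rightwards, upwards and leftwards respectively. -/
def RaysFromCorners (h : ℝ) (m₁ m₂ m₃ m₄ : ℝ²) : Prop :=
  m₁ 0 = -h ∧ m₁ 1 ≤ -h ∧ h ≤ m₂ 0 ∧ m₂ 1 = -h ∧ m₃ 0 = h ∧ h ≤ m₃ 1 ∧ m₄ 0 ≤ -h ∧ m₄ 1 = h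

namespace RaysFromCorners

variable {m₁ m₂ m₃ m₄ : ℝ²}

lemma quarterTurn (hm : RaysFromCorners h m₁ m₂ m₃ m₄) :
    RaysFromCorners h (quarterTurn m₄) (quarterTurn m₁) (quarterTurn m₂) (quarterTurn m₃) := by
  obtain ⟨h₁, h₁', h₂, h₂', h₃, h₃', h₄, h₄'⟩ := hm
  simp only [RaysFromCorners, quarterTurn_apply_zero, quarterTurn_apply_one]
  refine ⟨?_, ?_, ?_, ?_, ?_, ?_, ?_, ?_⟩ <;> linarith

lemma two_mul_le_dist (hm : RaysFromCorners h m₁ m₂ m₃ m₄) : 2 * h ≤ dist m₁ m₂ := by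
  have := abs_sub_apply_le_dist m₂ m₁ 0
  rw [dist_comm] at this
  linarith [le_abs_self (m₂ 0 - m₁ 0), hm.1, hm.2.2.1]

lemma two_mul_sqrt_two_mul_le_dist (hm : RaysFromCorners h m₁ m₂ m₃ m₄) :
    2 * √2 * h ≤ dist m₁ m₃ := by
  obtain ⟨h₁, h₁', -, -, h₃, h₃', -, -⟩ := hm
  rcases lt_or_ge h 0 with hh | hh
  · nlinarith [dist_nonneg (x := m₁) (y := m₃), sqrt_nonneg 2]
  rw [dist_eq_sqrt, h₁, h₃, le_sqrt (by positivity) (by positivity), mul_pow, mul_pow,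
    sq_sqrt zero_le_two]
  nlinarith

lemma lt_pentagon (hε : 0 ≤ ε) (hεh : 3 * ε ≤ 2 * h) (hm : RaysFromCorners h m₁ m₂ m₃ m₄)
    {p : ℝ²} (hp : ∀ q ∈ squareBoundary h, (h + ε) ^ 2 - h ^ 2 < dist p q ^ 2) :
    8 * h + 2 * ε < dist m₁ p + dist p m₂ + dist m₂ m₃ + dist m₃ m₄ + dist m₄ m₁ := by
  obtain ⟨h₁, h₁', h₂, h₂', h₃, h₃', h₄, h₄'⟩ := hm
  have hO₁ : dist !₂[-h, -h] m₁ = -h - m₁ 1 := by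
    rw [dist_eq_abs_of_apply_zero_eq (by simp [h₁])]
    simp only [Matrix.cons_val_one, Matrix.cons_val_zero]
    exact abs_of_nonneg (by linarith)
  have h23 := abs_sub_apply_le_dist m₃ m₂ 1
  have h34 := abs_sub_apply_le_dist m₃ m₄ 0
  have h41 := abs_sub_apply_le_dist m₄ m₁ 1
  rw [dist_comm m₃ m₂] at h23
  linarith [two_mul_add_lt_dist_add_dist hε hεh hp h₂ h₂', dist_triangle !₂[-h, -h] m₁ p,
    le_abs_self (m₃ 1 - m₂ 1), le_abs_self (m₃ 0 - m₄ 0), le_abs_self (m₄ 1 - m₁ 1)]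

lemma lt_tourLength (hε : 0 < ε) (hεh : 3 * ε ≤ 2 * h) {x : Fin 5 → ℝ²}
    (hx : RaysFromCorners h (x 1) (x 2) (x 3) (x 4))
    (hp : ∀ q ∈ squareBoundary h, (h + ε) ^ 2 - h ^ 2 < dist (x 0) q ^ 2)
    (σ : Equiv.Perm (Fin 5)) : 8 * h + 2 * ε < tourLength (x ∘ σ) := by
  have hx₂ := hx.quarterTurn
  have hx₃ := hx₂.quarterTurn
  have hx₄ := hx₃.quarterTurn
  have hp₂ := lt_dist_quarterTurn_sq hp
  have hp₃ := lt_dist_quarterTurn_sq hp₂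
  have hp₄ := lt_dist_quarterTurn_sq hp₃
  have hL : 8 * h + 2 * ε < 2 * (2 * h) + 2 * (2 * √2 * h) := by
    have : (4 : ℝ) / 3 < √2 := by rw [lt_sqrt (by norm_num)]; norm_num
    nlinarith
  have h41 := hx₂.two_mul_le_dist
  have h34 := hx₃.two_mul_le_dist
  have h23 := hx₄.two_mul_le_dist
  have h24 := hx₂.two_mul_sqrt_two_mul_le_dist
  have P₄ := hx₂.lt_pentagon hε.le hεh hp₂
  have P₃ := hx₃.lt_pentagon hε.le hεh hp₃
  have P₂ := hx₄.lt_pentagon hε.le hεh hp₄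
  simp only [dist_quarterTurn] at h41 h34 h23 h24 P₂ P₃ P₄
  rw [dist_comm] at h24
  exact lt_tourLength_of_square x hL hx.two_mul_le_dist h23 h34 h41
    hx.two_mul_sqrt_two_mul_le_dist h24 (hx.lt_pentagon hε.le hεh hp) P₂ P₃ P₄ σ

end RaysFromCorners

end Plane

lemma add_mem_square_iff {a b h : ℝ} {q : ℝ²} :
    !₂[a + h, b + h] + q ∈ {p : ℝ² | p 0 ∈ Icc a (a + 2 * h) ∧ p 1 ∈ Icc b (b + 2 * h)} ↔
      |q 0| ≤ h ∧ |q 1| ≤ h := by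
  simp only [mem_ofPred_eq, PiLp.add_apply, Matrix.cons_val_zero, Matrix.cons_val_one, mem_Icc,
    abs_le]
  constructor <;> rintro ⟨⟨h1, h2⟩, h3, h4⟩ <;> refine ⟨⟨?_, ?_⟩, ?_, ?_⟩ <;> linarith

lemma add_mem_frontier_square {a b h : ℝ} {q : ℝ²} (hq : q ∈ squareBoundary h) :
    !₂[a + h, b + h] + q ∈
      frontier {p : ℝ² | p 0 ∈ Icc a (a + 2 * h) ∧ p 1 ∈ Icc b (b + 2 * h)} := by
  obtain ⟨h₀, h₁⟩ := max_le_iff.1 hq.le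
  refine ⟨subset_closure (add_mem_square_iff.2 ⟨h₀, h₁⟩), fun hint ↦ ?_⟩
  rw [interior_setOf_apply_mem, interior_Icc, interior_Icc] at hint
  simp only [mem_ofPred_eq, PiLp.add_apply, Matrix.cons_val_zero, Matrix.cons_val_one,
    mem_Ioo] at hint
  refine (max_lt (abs_lt.2 ⟨?_, ?_⟩) (abs_lt.2 ⟨?_, ?_⟩)).ne hq <;> linarith

lemma exists_raysFromCorners {γ : ℝ → ℝ²} {I : Set ℝ} {U : Set ℝ²} (hU : IsBounded U)
    (hfr : frontier U ⊆ γ '' I) {c : ℝ²} {h : ℝ} (hh : 0 ≤ h)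
    (hsq : ∀ q : ℝ², |q 0| ≤ h → |q 1| ≤ h → c + q ∈ U) :
    ∃ s₁ ∈ I, ∃ s₂ ∈ I, ∃ s₃ ∈ I, ∃ s₄ ∈ I,
      RaysFromCorners h (γ s₁ - c) (γ s₂ - c) (γ s₃ - c) (γ s₄ - c) := by
  have ray : ∀ q v : ℝ², |q 0| ≤ h → |q 1| ≤ h → v ≠ 0 →
      ∃ s ∈ I, ∃ T : ℝ, 0 ≤ T ∧ γ s - c = q + T • v := by
    intro q v hq₀ hq₁ hv
    obtain ⟨T, hT, hmem⟩ := exists_nonneg_add_smul_mem_frontier hU (hsq q hq₀ hq₁) hv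
    obtain ⟨s, hs, hγs⟩ := hfr hmem
    exact ⟨s, hs, T, hT, by rw [hγs, add_assoc, add_sub_cancel_left]⟩
  have hh' : |h| ≤ h ∧ |-h| ≤ h := by simp [abs_of_nonneg hh]
  have e₀ : (!₂[1, 0] : ℝ²) ≠ 0 := fun he ↦ by simpa using congrArg (· 0) he
  have e₁ : (!₂[0, 1] : ℝ²) ≠ 0 := fun he ↦ by simpa using congrArg (· 1) he
  obtain ⟨s₁, hs₁, T₁, hT₁, h₁⟩ := ray !₂[-h, -h] (-!₂[0, 1]) (by simpa using hh'.2)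
    (by simpa using hh'.2) (neg_ne_zero.2 e₁)
  obtain ⟨s₂, hs₂, T₂, hT₂, h₂⟩ := ray !₂[h, -h] !₂[1, 0] (by simpa using hh'.1)
    (by simpa using hh'.2) e₀
  obtain ⟨s₃, hs₃, T₃, hT₃, h₃⟩ := ray !₂[h, h] !₂[0, 1] (by simpa using hh'.1)
    (by simpa using hh'.1) e₁
  obtain ⟨s₄, hs₄, T₄, hT₄, h₄⟩ := ray !₂[-h, h] (-!₂[1, 0]) (by simpa using hh'.2)
    (by simpa using hh'.1) (neg_ne_zero.2 e₀)
  refine ⟨s₁, hs₁, s₂, hs₂, s₃, hs₃, s₄, hs₄, ?_⟩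
  simp only [RaysFromCorners, h₁, h₂, h₃, h₄]
  simpa using ⟨hT₁, hT₂, hT₃, hT₄⟩

theorem stmt0_general (a b : ℝ) (γ : ℝ → EuclideanSpace ℝ (Fin 2))
    (hclosed : γ 0 = γ 1)
    (hlen : eVariationOn γ (Set.Icc (0:ℝ) 1) ≤ ENNReal.ofReal (1/2 + 1/50))
    (S : Set (EuclideanSpace ℝ (Fin 2)))
    (hS : S = {p | p 0 ∈ Set.Icc a (a + 1/8) ∧ p 1 ∈ Set.Icc b (b + 1/8)})
    (hencl : ∃ U : Set (EuclideanSpace ℝ (Fin 2)), IsOpen U ∧ Bornology.IsBounded U ∧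
      S ⊆ U ∧ frontier U ⊆ γ '' Set.Icc 0 1) :
    ∀ t ∈ Set.Icc (0:ℝ) 1,
      Metric.infDist (γ t) (frontier S) ≤ Real.sqrt ((1/16 + 1/100)^2 - (1/16)^2) := by
  obtain ⟨U, -, hU, hSU, hfr⟩ := hencl
  replace hS :
      S = {p : ℝ² | p 0 ∈ Icc a (a + 2 * (1 / 16)) ∧ p 1 ∈ Icc b (b + 2 * (1 / 16))} := by
    rw [hS]; norm_num
  set c : ℝ² := !₂[a + 1 / 16, b + 1 / 16]
  obtain ⟨t₁, ht₁, t₂, ht₂, t₃, ht₃, t₄, ht₄, hrays⟩ := exists_raysFromCorners hU hfr (c := c)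
    (by norm_num) fun q h₀ h₁ ↦ hSU (hS ▸ add_mem_square_iff.2 ⟨h₀, h₁⟩)
  intro t ht
  by_contra! hfar
  have hp : ∀ q ∈ squareBoundary (1 / 16),
      (1 / 16 + 1 / 100) ^ 2 - (1 / 16) ^ 2 < dist (γ t - c) q ^ 2 := fun q hq ↦ by
    rw [dist_eq_norm, sub_sub, ← dist_eq_norm]
    exact lt_sq_of_sqrt_lt (hfar.trans_le
      (Metric.infDist_le_dist_of_mem (hS ▸ add_mem_frontier_square hq)))
  set τ : Fin 5 → ℝ := ![t, t₁, t₂, t₃, t₄]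
  obtain ⟨σ, hσ⟩ := exists_perm_ofReal_tourLength_le hclosed (t := τ)
    fun i ↦ by fin_cases i <;> assumption
  have hlt := hrays.lt_tourLength (x := fun i ↦ γ (τ i) - c) (by norm_num) (by norm_num) hp σ
  rw [show (fun i ↦ γ (τ i) - c) ∘ σ = fun i ↦ (γ ∘ τ ∘ σ) i - c from rfl,
    tourLength_sub_right] at hlt
  have := (ENNReal.ofReal_le_ofReal_iff (by norm_num)).1 (hσ.trans hlen)
  linarith

/-- Any closed curve of length at most `1/2 + 1/50` that encloses an axis-parallel
square of side length `1/8` lies entirely within distance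
`√((1/16+1/100)^2 - (1/16)^2)` of the boundary of the square. -/
theorem stmt0 (a b : ℝ) (γ : ℝ → EuclideanSpace ℝ (Fin 2))
    (hcont : ContinuousOn γ (Set.Icc 0 1)) (hclosed : γ 0 = γ 1)
    (hlen : eVariationOn γ (Set.Icc (0:ℝ) 1) ≤ ENNReal.ofReal (1/2 + 1/50))
    (S : Set (EuclideanSpace ℝ (Fin 2)))
    (hS : S = {p | p 0 ∈ Set.Icc a (a + 1/8) ∧ p 1 ∈ Set.Icc b (b + 1/8)})
    (hencl : ∃ U : Set (EuclideanSpace ℝ (Fin 2)), IsOpen U ∧ Bornology.IsBounded U ∧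
      S ⊆ U ∧ frontier U ⊆ γ '' Set.Icc 0 1) :
    ∀ t ∈ Set.Icc (0:ℝ) 1,
      Metric.infDist (γ t) (frontier S) ≤ Real.sqrt ((1/16 + 1/100)^2 - (1/16)^2) :=
  stmt0_general a b γ hclosed hlen S hS hencl
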